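/- Fix reals τ > 0 and 0 < α₁ < 1 < α₂. There exists a constant C ≥ 0 (depending only on τ, α₁, α₂) such that: for every finite nonempty set A of integers with k := |A|, setting T := ⌈τ·k^{3/2}⌉ and Ā := Ā(A,T), if T ≤ diam(A) ≤ k², then V(A,T) ≥ ((u₁ + v₁)·(α₁ − 1)² + (2 − u₂ − v₂)·(α₂ − 1)²)·τ³·k^{5/2} − C·k², where u₁, u₂, v₁, v₂ are the cutoffs of A at levels α₁, α₂ for window size T. -/

import Mathlib

open scoped Classical

noncomputable section

/-- A finite set of integers is a Sidon set if all nontrivial solutions to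
`a - b = c - d` are excluded. -/
def IsSidon (A : Finset ℤ) : Prop :=
  ∀ a ∈ A, ∀ b ∈ A, ∀ c ∈ A, ∀ d ∈ A, a - b = c - d → (a = b ∧ c = d) ∨ (a = c ∧ b = d)

/-- The minimum of a finite set of integers (junk value `0` for `∅`). -/
def Amin (A : Finset ℤ) : ℤ := A.min.getD 0

/-- The maximum of a finite set of integers (junk value `0` for `∅`). -/
def Amax (A : Finset ℤ) : ℤ := A.max.getD 0

/-- The diameter `max A - min A` of a finite set of integers. -/
def diam (A : Finset ℤ) : ℤ := Amax A - Amin A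

/-- `A_i^{(T)}`, the number of elements of `A` in the window `[i - T, i)`. -/
def wc (A : Finset ℤ) (T i : ℤ) : ℕ := (A.filter (fun a => i - T ≤ a ∧ a < i)).card

/-- `Ā(A,T) = |A|·T/(T + diam A)`. -/
def Abar (A : Finset ℤ) (T : ℤ) : ℚ := ((A.card : ℚ) * (T : ℚ)) / ((T : ℚ) + (diam A : ℚ))

/-- `V(A,T)`, the total squared deviation of the window counts from `Ā(A,T)`. -/
def V (A : Finset ℤ) (T : ℤ) : ℚ :=
  ∑ i ∈ Finset.Icc (Amin A + 1) (Amax A + T), ((wc A T i : ℚ) - Abar A T) ^ 2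

/-- `S(A,T) = Σ (T - r)` over `1 ≤ r ≤ T - 1` not of the form `a - b` with `a, b ∈ A`. -/
def S (A : Finset ℤ) (T : ℤ) : ℤ :=
  ∑ r ∈ Finset.Icc 1 (T - 1), if ∃ a ∈ A, ∃ b ∈ A, a - b = r then 0 else T - r

/-- The left cutoff `u` at level `α` for window size `T`: `(i₀ - min A)/T` where `i₀` is
the least `i ∈ [min A, min A + T]` with `A_i^{(T)} ≥ α·Ā(A,T)`, or `1` if none exists. -/
def uCut (A : Finset ℤ) (T : ℤ) (α : ℝ) : ℝ :=
  if ∃ i ∈ Finset.Icc (Amin A) (Amin A + T), α * (Abar A T : ℝ) ≤ (wc A T i : ℝ) then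
    ((sInf {i : ℤ | i ∈ Finset.Icc (Amin A) (Amin A + T) ∧
        α * (Abar A T : ℝ) ≤ (wc A T i : ℝ)} - Amin A : ℤ) : ℝ) / (T : ℝ)
  else 1

/-- The right cutoff `v` at level `α` for window size `T`: `(max A + T + 1 - i₀)/T` where
`i₀` is the greatest `i ∈ [max A + 1, max A + T + 1]` with `A_i^{(T)} ≥ α·Ā(A,T)`,
or `1` if none exists. -/
def vCut (A : Finset ℤ) (T : ℤ) (α : ℝ) : ℝ :=
  if ∃ i ∈ Finset.Icc (Amax A + 1) (Amax A + T + 1), α * (Abar A T : ℝ) ≤ (wc A T i : ℝ) then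
    ((Amax A + T + 1 - sSup {i : ℤ | i ∈ Finset.Icc (Amax A + 1) (Amax A + T + 1) ∧
        α * (Abar A T : ℝ) ≤ (wc A T i : ℝ)} : ℤ) : ℝ) / (T : ℝ)
  else 1


lemma Amin_eq_min' {A : Finset ℤ} (hA : A.Nonempty) : Amin A = A.min' hA := by
  unfold Amin
  rw [← Finset.coe_min' hA]
  rfl

lemma Amax_eq_max' {A : Finset ℤ} (hA : A.Nonempty) : Amax A = A.max' hA := by
  unfold Amax
  rw [← Finset.coe_max' hA]
  rfl

lemma Amin_le {A : Finset ℤ} {a : ℤ} (ha : a ∈ A) : Amin A ≤ a := by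
  rw [Amin_eq_min' ⟨a, ha⟩]
  exact Finset.min'_le _ _ ha

lemma le_Amax {A : Finset ℤ} {a : ℤ} (ha : a ∈ A) : a ≤ Amax A := by
  rw [Amax_eq_max' ⟨a, ha⟩]
  exact Finset.le_max' _ _ ha

lemma Amin_mem {A : Finset ℤ} (hA : A.Nonempty) : Amin A ∈ A := by
  rw [Amin_eq_min' hA]; exact A.min'_mem hA

lemma Amax_mem {A : Finset ℤ} (hA : A.Nonempty) : Amax A ∈ A := by
  rw [Amax_eq_max' hA]; exact A.max'_mem hA

lemma wc_mono_left (A : Finset ℤ) (T : ℤ) {i j : ℤ} (hij : i ≤ j) (hj : j ≤ Amin A + T) :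
    wc A T i ≤ wc A T j := by
  apply Finset.card_le_card
  intro a ha
  simp only [Finset.mem_filter] at ha ⊢
  exact ⟨ha.1, le_trans (by linarith [Amin_le ha.1]) (Amin_le ha.1), lt_of_lt_of_le ha.2.2 hij⟩

lemma wc_anti_right (A : Finset ℤ) (T : ℤ) {i j : ℤ} (hi : Amax A + 1 ≤ i) (hij : i ≤ j) :
    wc A T j ≤ wc A T i := by
  apply Finset.card_le_card
  intro a ha
  simp only [Finset.mem_filter] at ha ⊢
  exact ⟨ha.1, le_trans (by linarith) ha.2.1, by linarith [le_Amax ha.1]⟩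

lemma wc_min (A : Finset ℤ) (T : ℤ) : wc A T (Amin A) = 0 := by
  rw [wc, Finset.card_eq_zero, Finset.filter_eq_empty_iff]
  intro a ha h
  exact absurd h.2 (not_lt.2 (Amin_le ha))

lemma wc_top (A : Finset ℤ) (T : ℤ) : wc A T (Amax A + T + 1) = 0 := by
  rw [wc, Finset.card_eq_zero, Finset.filter_eq_empty_iff]
  intro a ha h
  have := le_Amax ha
  omega

section cut
variable {A : Finset ℤ} {T : ℤ} {α : ℝ}

lemma uCut_sInf_mem (hc : ∃ i ∈ Finset.Icc (Amin A) (Amin A + T),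
    α * (Abar A T : ℝ) ≤ (wc A T i : ℝ)) :
    sInf {i : ℤ | i ∈ Finset.Icc (Amin A) (Amin A + T) ∧
        α * (Abar A T : ℝ) ≤ (wc A T i : ℝ)} ∈
      {i : ℤ | i ∈ Finset.Icc (Amin A) (Amin A + T) ∧
        α * (Abar A T : ℝ) ≤ (wc A T i : ℝ)} :=
  Int.csInf_mem (by obtain ⟨i, h1, h2⟩ := hc; exact ⟨i, h1, h2⟩)
    ⟨Amin A, fun i hi => (Finset.mem_Icc.1 hi.1).1⟩

lemma uCut_sInf_le {j : ℤ} (hj : j ∈ Finset.Icc (Amin A) (Amin A + T))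
    (hj2 : α * (Abar A T : ℝ) ≤ (wc A T j : ℝ)) :
    sInf {i : ℤ | i ∈ Finset.Icc (Amin A) (Amin A + T) ∧
        α * (Abar A T : ℝ) ≤ (wc A T i : ℝ)} ≤ j :=
  csInf_le ⟨Amin A, fun i hi => (Finset.mem_Icc.1 hi.1).1⟩ ⟨hj, hj2⟩

lemma vCut_sSup_mem (hc : ∃ i ∈ Finset.Icc (Amax A + 1) (Amax A + T + 1),
    α * (Abar A T : ℝ) ≤ (wc A T i : ℝ)) :
    sSup {i : ℤ | i ∈ Finset.Icc (Amax A + 1) (Amax A + T + 1) ∧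
        α * (Abar A T : ℝ) ≤ (wc A T i : ℝ)} ∈
      {i : ℤ | i ∈ Finset.Icc (Amax A + 1) (Amax A + T + 1) ∧
        α * (Abar A T : ℝ) ≤ (wc A T i : ℝ)} :=
  Int.csSup_mem (by obtain ⟨i, h1, h2⟩ := hc; exact ⟨i, h1, h2⟩)
    ⟨Amax A + T + 1, fun i hi => (Finset.mem_Icc.1 hi.1).2⟩

lemma vCut_le_sSup {j : ℤ} (hj : j ∈ Finset.Icc (Amax A + 1) (Amax A + T + 1))
    (hj2 : α * (Abar A T : ℝ) ≤ (wc A T j : ℝ)) :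
    j ≤ sSup {i : ℤ | i ∈ Finset.Icc (Amax A + 1) (Amax A + T + 1) ∧
        α * (Abar A T : ℝ) ≤ (wc A T i : ℝ)} :=
  le_csSup ⟨Amax A + T + 1, fun i hi => (Finset.mem_Icc.1 hi.1).2⟩ ⟨hj, hj2⟩

lemma uCut_nonneg (hT : 0 < T) : 0 ≤ uCut A T α := by
  rw [uCut]
  split_ifs with hc
  · have h1 := (Finset.mem_Icc.1 (uCut_sInf_mem hc).1).1
    apply div_nonneg _ (by exact_mod_cast hT.le)
    have h1' := (Int.cast_mono (R := ℝ)) h1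
    push_cast at h1' ⊢
    linarith
  · norm_num

lemma uCut_le_one (hT : 0 < T) : uCut A T α ≤ 1 := by
  rw [uCut]
  split_ifs with hc
  · have h1 := (Finset.mem_Icc.1 (uCut_sInf_mem hc).1).2
    rw [div_le_one (by exact_mod_cast hT)]
    have h1' := (Int.cast_mono (R := ℝ)) h1
    push_cast at h1' ⊢
    linarith
  · exact le_refl 1

lemma vCut_nonneg (hT : 0 < T) : 0 ≤ vCut A T α := by
  rw [vCut]
  split_ifs with hc
  · have h1 := (Finset.mem_Icc.1 (vCut_sSup_mem hc).1).2
    apply div_nonneg _ (by exact_mod_cast hT.le)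
    have h1' := (Int.cast_mono (R := ℝ)) h1
    push_cast at h1' ⊢
    linarith
  · norm_num

lemma vCut_le_one (hT : 0 < T) : vCut A T α ≤ 1 := by
  rw [vCut]
  split_ifs with hc
  · have h1 := (Finset.mem_Icc.1 (vCut_sSup_mem hc).1).1
    rw [div_le_one (by exact_mod_cast hT)]
    have h1' := (Int.cast_mono (R := ℝ)) h1
    push_cast at h1' ⊢
    linarith
  · exact le_refl 1

end cut

section cards
variable {A : Finset ℤ} {T : ℤ} {α : ℝ}

lemma card_low_left (hT : 0 < T) :
    uCut A T α * T - 1 ≤ (((Finset.Icc (Amin A + 1) (Amin A + T)).filter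
      (fun i => (wc A T i : ℝ) < α * (Abar A T : ℝ))).card : ℝ) := by
  set F := (Finset.Icc (Amin A + 1) (Amin A + T)).filter
      (fun i => (wc A T i : ℝ) < α * (Abar A T : ℝ)) with hF
  have hT' : (0:ℝ) < (T:ℝ) := by exact_mod_cast hT
  rw [uCut]
  split_ifs with hc
  · have hmem := uCut_sInf_mem hc
    set i₁ := sInf {i : ℤ | i ∈ Finset.Icc (Amin A) (Amin A + T) ∧
        α * (Abar A T : ℝ) ≤ (wc A T i : ℝ)} with hi₁
    obtain ⟨hm1, _⟩ := hmem
    rw [Finset.mem_Icc] at hm1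
    have hsub : Finset.Icc (Amin A + 1) (i₁ - 1) ⊆ F := by
      intro i hi
      rw [Finset.mem_Icc] at hi
      rw [hF, Finset.mem_filter, Finset.mem_Icc]
      refine ⟨⟨hi.1, by omega⟩, ?_⟩
      by_contra h
      push_neg at h
      have := uCut_sInf_le (Finset.mem_Icc.2 ⟨by omega, by omega⟩) h
      omega
    have hcard := Finset.card_le_card hsub
    rw [Int.card_Icc] at hcard
    have h2 : ((i₁ - 1 + 1 - (Amin A + 1)).toNat : ℝ) ≤ (F.card : ℝ) := by exact_mod_cast hcard
    have h3 := Int.self_le_toNat (i₁ - 1 + 1 - (Amin A + 1))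
    have h3' : ((i₁ - 1 + 1 - (Amin A + 1) : ℤ) : ℝ) ≤ ((i₁ - 1 + 1 - (Amin A + 1)).toNat : ℝ) := by
      exact_mod_cast h3
    rw [div_mul_cancel₀ _ (ne_of_gt hT')]
    push_cast at h3' ⊢
    linarith
  · -- uCut = 1; every i in the Icc is in F
    have hsub : Finset.Icc (Amin A + 1) (Amin A + T) ⊆ F := by
      intro i hi
      rw [Finset.mem_Icc] at hi
      rw [hF, Finset.mem_filter, Finset.mem_Icc]
      refine ⟨⟨hi.1, hi.2⟩, ?_⟩
      by_contra h
      push_neg at h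
      exact hc ⟨i, Finset.mem_Icc.2 ⟨by omega, hi.2⟩, h⟩
    have hcard := Finset.card_le_card hsub
    rw [Int.card_Icc] at hcard
    have h2 : ((Amin A + T + 1 - (Amin A + 1)).toNat : ℝ) ≤ (F.card : ℝ) := by exact_mod_cast hcard
    have h3' : ((Amin A + T + 1 - (Amin A + 1) : ℤ) : ℝ) ≤ ((Amin A + T + 1 - (Amin A + 1)).toNat : ℝ) := by
      exact_mod_cast Int.self_le_toNat _
    push_cast at h3' ⊢
    linarith

lemma card_low_right (hT : 0 < T) :
    vCut A T α * T - 1 ≤ (((Finset.Icc (Amax A + 1) (Amax A + T)).filter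
      (fun i => (wc A T i : ℝ) < α * (Abar A T : ℝ))).card : ℝ) := by
  set F := (Finset.Icc (Amax A + 1) (Amax A + T)).filter
      (fun i => (wc A T i : ℝ) < α * (Abar A T : ℝ)) with hF
  have hT' : (0:ℝ) < (T:ℝ) := by exact_mod_cast hT
  rw [vCut]
  split_ifs with hc
  · have hmem := vCut_sSup_mem hc
    set i₁ := sSup {i : ℤ | i ∈ Finset.Icc (Amax A + 1) (Amax A + T + 1) ∧
        α * (Abar A T : ℝ) ≤ (wc A T i : ℝ)} with hi₁
    obtain ⟨hm1, _⟩ := hmem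
    rw [Finset.mem_Icc] at hm1
    have hsub : Finset.Icc (i₁ + 1) (Amax A + T) ⊆ F := by
      intro i hi
      rw [Finset.mem_Icc] at hi
      rw [hF, Finset.mem_filter, Finset.mem_Icc]
      refine ⟨⟨by omega, hi.2⟩, ?_⟩
      by_contra h
      push_neg at h
      have := vCut_le_sSup (Finset.mem_Icc.2 ⟨by omega, by omega⟩) h
      omega
    have hcard := Finset.card_le_card hsub
    rw [Int.card_Icc] at hcard
    have h2 : ((Amax A + T + 1 - (i₁ + 1)).toNat : ℝ) ≤ (F.card : ℝ) := by exact_mod_cast hcard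
    have h3' : ((Amax A + T + 1 - (i₁ + 1) : ℤ) : ℝ) ≤ ((Amax A + T + 1 - (i₁ + 1)).toNat : ℝ) := by
      exact_mod_cast Int.self_le_toNat _
    rw [div_mul_cancel₀ _ (ne_of_gt hT')]
    push_cast at h3' ⊢
    linarith
  · have hsub : Finset.Icc (Amax A + 1) (Amax A + T) ⊆ F := by
      intro i hi
      rw [Finset.mem_Icc] at hi
      rw [hF, Finset.mem_filter, Finset.mem_Icc]
      refine ⟨⟨hi.1, hi.2⟩, ?_⟩
      by_contra h
      push_neg at h
      exact hc ⟨i, Finset.mem_Icc.2 ⟨hi.1, by omega⟩, h⟩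
    have hcard := Finset.card_le_card hsub
    rw [Int.card_Icc] at hcard
    have h2 : ((Amax A + T + 1 - (Amax A + 1)).toNat : ℝ) ≤ (F.card : ℝ) := by exact_mod_cast hcard
    have h3' : ((Amax A + T + 1 - (Amax A + 1) : ℤ) : ℝ) ≤ ((Amax A + T + 1 - (Amax A + 1)).toNat : ℝ) := by
      exact_mod_cast Int.self_le_toNat _
    push_cast at h3' ⊢
    linarith

lemma card_high_left (hT : 0 < T) (hQ : 0 < α * (Abar A T : ℝ)) :
    (1 - uCut A T α) * T ≤ (((Finset.Icc (Amin A + 1) (Amin A + T)).filter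
      (fun i => α * (Abar A T : ℝ) ≤ (wc A T i : ℝ))).card : ℝ) := by
  set F := (Finset.Icc (Amin A + 1) (Amin A + T)).filter
      (fun i => α * (Abar A T : ℝ) ≤ (wc A T i : ℝ)) with hF
  have hT' : (0:ℝ) < (T:ℝ) := by exact_mod_cast hT
  rw [uCut]
  split_ifs with hc
  · have hmem := uCut_sInf_mem hc
    set i₁ := sInf {i : ℤ | i ∈ Finset.Icc (Amin A) (Amin A + T) ∧
        α * (Abar A T : ℝ) ≤ (wc A T i : ℝ)} with hi₁
    obtain ⟨hm1, hm2⟩ := hmem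
    rw [Finset.mem_Icc] at hm1
    have hne : i₁ ≠ Amin A := by
      intro h
      rw [h, wc_min] at hm2
      simp at hm2
      linarith
    have hsub : Finset.Icc i₁ (Amin A + T) ⊆ F := by
      intro i hi
      rw [Finset.mem_Icc] at hi
      rw [hF, Finset.mem_filter, Finset.mem_Icc]
      refine ⟨⟨by omega, hi.2⟩, ?_⟩
      calc α * (Abar A T : ℝ) ≤ (wc A T i₁ : ℝ) := hm2
        _ ≤ (wc A T i : ℝ) := by exact_mod_cast wc_mono_left A T hi.1 hi.2
    have hcard := Finset.card_le_card hsub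
    rw [Int.card_Icc] at hcard
    have h2 : ((Amin A + T + 1 - i₁).toNat : ℝ) ≤ (F.card : ℝ) := by exact_mod_cast hcard
    have h3' : ((Amin A + T + 1 - i₁ : ℤ) : ℝ) ≤ ((Amin A + T + 1 - i₁).toNat : ℝ) := by
      exact_mod_cast Int.self_le_toNat _
    rw [sub_mul, one_mul, div_mul_cancel₀ _ (ne_of_gt hT')]
    push_cast at h3' ⊢
    linarith
  · rw [sub_self, zero_mul]
    positivity

lemma card_high_right (hT : 0 < T) (hQ : 0 < α * (Abar A T : ℝ)) :
    (1 - vCut A T α) * T ≤ (((Finset.Icc (Amax A + 1) (Amax A + T)).filter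
      (fun i => α * (Abar A T : ℝ) ≤ (wc A T i : ℝ))).card : ℝ) := by
  set F := (Finset.Icc (Amax A + 1) (Amax A + T)).filter
      (fun i => α * (Abar A T : ℝ) ≤ (wc A T i : ℝ)) with hF
  have hT' : (0:ℝ) < (T:ℝ) := by exact_mod_cast hT
  rw [vCut]
  split_ifs with hc
  · have hmem := vCut_sSup_mem hc
    set i₁ := sSup {i : ℤ | i ∈ Finset.Icc (Amax A + 1) (Amax A + T + 1) ∧
        α * (Abar A T : ℝ) ≤ (wc A T i : ℝ)} with hi₁
    obtain ⟨hm1, hm2⟩ := hmem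
    rw [Finset.mem_Icc] at hm1
    have hne : i₁ ≠ Amax A + T + 1 := by
      intro h
      rw [h, wc_top] at hm2
      simp at hm2
      linarith
    have hsub : Finset.Icc (Amax A + 1) i₁ ⊆ F := by
      intro i hi
      rw [Finset.mem_Icc] at hi
      rw [hF, Finset.mem_filter, Finset.mem_Icc]
      refine ⟨⟨hi.1, by omega⟩, ?_⟩
      calc α * (Abar A T : ℝ) ≤ (wc A T i₁ : ℝ) := hm2
        _ ≤ (wc A T i : ℝ) := by exact_mod_cast wc_anti_right A T hi.1 hi.2
    have hcard := Finset.card_le_card hsub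
    rw [Int.card_Icc] at hcard
    have h2 : ((i₁ + 1 - (Amax A + 1)).toNat : ℝ) ≤ (F.card : ℝ) := by exact_mod_cast hcard
    have h3' : ((i₁ + 1 - (Amax A + 1) : ℤ) : ℝ) ≤ ((i₁ + 1 - (Amax A + 1)).toNat : ℝ) := by
      exact_mod_cast Int.self_le_toNat _
    rw [sub_mul, one_mul, div_mul_cancel₀ _ (ne_of_gt hT')]
    push_cast at h3' ⊢
    linarith
  · rw [sub_self, zero_mul]
    positivity

end cards

lemma V_ge_main {A : Finset ℤ} {T : ℤ} {α₁ α₂ : ℝ} (hT : 0 < T) (hTd : T ≤ diam A)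
    (hQ : 0 < ((Abar A T : ℚ) : ℝ)) (hα₁ : 0 < α₁) (h₁ : α₁ < 1) (h₂ : 1 < α₂) :
    (V A T : ℝ) ≥
      (uCut A T α₁ * T - 1) * ((1 - α₁) * ((Abar A T : ℚ) : ℝ)) ^ 2
      + (vCut A T α₁ * T - 1) * ((1 - α₁) * ((Abar A T : ℚ) : ℝ)) ^ 2
      + (1 - uCut A T α₂) * T * ((α₂ - 1) * ((Abar A T : ℚ) : ℝ)) ^ 2
      + (1 - vCut A T α₂) * T * ((α₂ - 1) * ((Abar A T : ℚ) : ℝ)) ^ 2 := by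
  set Q : ℝ := ((Abar A T : ℚ) : ℝ) with hQdef
  set f : ℤ → ℝ := fun i => ((wc A T i : ℝ) - Q) ^ 2 with hf
  set L₁ := (Finset.Icc (Amin A + 1) (Amin A + T)).filter
      (fun i => (wc A T i : ℝ) < α₁ * Q) with hL₁
  set L₂ := (Finset.Icc (Amin A + 1) (Amin A + T)).filter
      (fun i => α₂ * Q ≤ (wc A T i : ℝ)) with hL₂
  set R₁ := (Finset.Icc (Amax A + 1) (Amax A + T)).filter
      (fun i => (wc A T i : ℝ) < α₁ * Q) with hR₁
  set R₂ := (Finset.Icc (Amax A + 1) (Amax A + T)).filter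
      (fun i => α₂ * Q ≤ (wc A T i : ℝ)) with hR₂
  have hdiam : Amin A + T ≤ Amax A := by unfold diam at hTd; omega
  have hQ12 : α₁ * Q < α₂ * Q := by
    apply mul_lt_mul_of_pos_right _ hQ
    linarith
  have hdisjL : Disjoint L₁ L₂ := by
    rw [Finset.disjoint_left]
    intro i hi1 hi2
    rw [hL₁, Finset.mem_filter] at hi1
    rw [hL₂, Finset.mem_filter] at hi2
    linarith [hi1.2, hi2.2]
  have hdisjR : Disjoint R₁ R₂ := by
    rw [Finset.disjoint_left]
    intro i hi1 hi2
    rw [hR₁, Finset.mem_filter] at hi1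
    rw [hR₂, Finset.mem_filter] at hi2
    linarith [hi1.2, hi2.2]
  have hsepL : ∀ i ∈ Finset.Icc (Amin A + 1) (Amin A + T),
      i ∉ Finset.Icc (Amax A + 1) (Amax A + T) := by
    intro i hi hi'
    rw [Finset.mem_Icc] at hi hi'
    omega
  have hdisjLR1 : Disjoint (L₁ ∪ L₂) R₁ := by
    rw [Finset.disjoint_left]
    intro i hi hi'
    rw [Finset.mem_union, hL₁, hL₂, Finset.mem_filter, Finset.mem_filter] at hi
    rw [hR₁, Finset.mem_filter] at hi'
    rcases hi with hi | hi <;> exact hsepL i hi.1 hi'.1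
  have hdisjLR2 : Disjoint (L₁ ∪ L₂ ∪ R₁) R₂ := by
    rw [Finset.disjoint_left]
    intro i hi hi'
    rw [hR₂, Finset.mem_filter] at hi'
    rw [Finset.mem_union, Finset.mem_union, hL₁, hL₂, Finset.mem_filter, Finset.mem_filter] at hi
    rcases hi with (hi | hi) | hi
    · exact hsepL i hi.1 hi'.1
    · exact hsepL i hi.1 hi'.1
    · rw [hR₁, Finset.mem_filter] at hi
      linarith [hi.2, hi'.2]
  have hsub : L₁ ∪ L₂ ∪ R₁ ∪ R₂ ⊆ Finset.Icc (Amin A + 1) (Amax A + T) := by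
    intro i hi
    rw [Finset.mem_union, Finset.mem_union, Finset.mem_union] at hi
    rw [Finset.mem_Icc]
    rcases hi with ((hi | hi) | hi) | hi <;>
      [skip; skip; skip; skip] <;>
      first
        | (rw [hL₁, Finset.mem_filter, Finset.mem_Icc] at hi; omega)
        | (rw [hL₂, Finset.mem_filter, Finset.mem_Icc] at hi; omega)
        | (rw [hR₁, Finset.mem_filter, Finset.mem_Icc] at hi; omega)
        | (rw [hR₂, Finset.mem_filter, Finset.mem_Icc] at hi; omega)
  have hVsum : (V A T : ℝ) = ∑ i ∈ Finset.Icc (Amin A + 1) (Amax A + T), f i := by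
    rw [V]
    push_cast
    rfl
  have step1 : ∑ i ∈ L₁ ∪ L₂ ∪ R₁ ∪ R₂, f i ≤ (V A T : ℝ) := by
    rw [hVsum]
    apply Finset.sum_le_sum_of_subset_of_nonneg hsub
    intro i _ _
    exact sq_nonneg _
  have step2 : ∑ i ∈ L₁ ∪ L₂ ∪ R₁ ∪ R₂, f i
      = ∑ i ∈ L₁, f i + ∑ i ∈ L₂, f i + ∑ i ∈ R₁, f i + ∑ i ∈ R₂, f i := by
    rw [Finset.sum_union hdisjLR2, Finset.sum_union hdisjLR1, Finset.sum_union hdisjL]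
  set c₁ : ℝ := ((1 - α₁) * Q) ^ 2 with hc₁
  set c₂ : ℝ := ((α₂ - 1) * Q) ^ 2 with hc₂
  have hc₁0 : 0 ≤ c₁ := sq_nonneg _
  have hc₂0 : 0 ≤ c₂ := sq_nonneg _
  have hlow : ∀ i : ℤ, (wc A T i : ℝ) < α₁ * Q → c₁ ≤ f i := by
    intro i hi
    show ((1 - α₁) * Q) ^ 2 ≤ ((wc A T i : ℝ) - Q) ^ 2
    have hfac : 0 ≤ (α₁ * Q - (wc A T i : ℝ)) * ((2 - α₁) * Q - (wc A T i : ℝ)) := by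
      apply mul_nonneg (by linarith)
      nlinarith
    nlinarith [hfac]
  have hhigh : ∀ i : ℤ, α₂ * Q ≤ (wc A T i : ℝ) → c₂ ≤ f i := by
    intro i hi
    show ((α₂ - 1) * Q) ^ 2 ≤ ((wc A T i : ℝ) - Q) ^ 2
    have hfac : 0 ≤ ((wc A T i : ℝ) - α₂ * Q) * ((wc A T i : ℝ) - (2 - α₂) * Q) := by
      apply mul_nonneg (by linarith)
      nlinarith
    nlinarith [hfac]
  have hsumL₁ : (L₁.card : ℝ) * c₁ ≤ ∑ i ∈ L₁, f i := by
    have := Finset.card_nsmul_le_sum L₁ f c₁ (fun i hi => by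
      rw [hL₁, Finset.mem_filter] at hi; exact hlow i hi.2)
    simpa [nsmul_eq_mul] using this
  have hsumR₁ : (R₁.card : ℝ) * c₁ ≤ ∑ i ∈ R₁, f i := by
    have := Finset.card_nsmul_le_sum R₁ f c₁ (fun i hi => by
      rw [hR₁, Finset.mem_filter] at hi; exact hlow i hi.2)
    simpa [nsmul_eq_mul] using this
  have hsumL₂ : (L₂.card : ℝ) * c₂ ≤ ∑ i ∈ L₂, f i := by
    have := Finset.card_nsmul_le_sum L₂ f c₂ (fun i hi => by
      rw [hL₂, Finset.mem_filter] at hi; exact hhigh i hi.2)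
    simpa [nsmul_eq_mul] using this
  have hsumR₂ : (R₂.card : ℝ) * c₂ ≤ ∑ i ∈ R₂, f i := by
    have := Finset.card_nsmul_le_sum R₂ f c₂ (fun i hi => by
      rw [hR₂, Finset.mem_filter] at hi; exact hhigh i hi.2)
    simpa [nsmul_eq_mul] using this
  have hcardL₁ := card_low_left (A := A) (α := α₁) hT
  have hcardR₁ := card_low_right (A := A) (α := α₁) hT
  have hQ2 : 0 < α₂ * Q := by positivity
  have hcardL₂ := card_high_left (A := A) (α := α₂) hT hQ2
  have hcardR₂ := card_high_right (A := A) (α := α₂) hT hQ2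
  have m1 : (uCut A T α₁ * T - 1) * c₁ ≤ (L₁.card : ℝ) * c₁ :=
    mul_le_mul_of_nonneg_right hcardL₁ hc₁0
  have m2 : (vCut A T α₁ * T - 1) * c₁ ≤ (R₁.card : ℝ) * c₁ :=
    mul_le_mul_of_nonneg_right hcardR₁ hc₁0
  have m3 : (1 - uCut A T α₂) * T * c₂ ≤ (L₂.card : ℝ) * c₂ :=
    mul_le_mul_of_nonneg_right hcardL₂ hc₂0
  have m4 : (1 - vCut A T α₂) * T * c₂ ≤ (R₂.card : ℝ) * c₂ :=
    mul_le_mul_of_nonneg_right hcardR₂ hc₂0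
  have := step2 ▸ step1
  linarith

lemma key_ineq (τ r t d : ℝ) (hτ : 0 < τ) (hr : 1 ≤ r) (ht1 : 1 ≤ t)
    (hlb : τ * (r ^ 2 * r) ≤ t) (hub : t ≤ τ * (r ^ 2 * r) + 1) (htd : t ≤ d)
    (hd : d ≤ (r ^ 2) ^ 2) :
    τ ^ 3 * ((r ^ 2) ^ 2 * r) - τ ^ 3 * ((τ + 1) ^ 2 + 2 * (τ + 1)) * (r ^ 2) ^ 2
      ≤ t * ((r ^ 2 * t) / (t + d)) ^ 2 := by
  set c : ℝ := τ + 1 with hc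
  set C₁ : ℝ := τ ^ 3 * (c ^ 2 + 2 * c) with hC₁
  have hr0 : (0:ℝ) < r := by linarith
  have htd0 : (0:ℝ) < t + d := by linarith
  have hL : t * ((r ^ 2 * t) / (t + d)) ^ 2 = (r ^ 2) ^ 2 * t ^ 3 / (t + d) ^ 2 := by
    field_simp
  rw [hL]
  rw [le_div_iff₀ (by positivity)]
  -- goal : (τ^3 r⁵ - C₁ r⁴) * (t+d)^2 ≤ r⁴ t³
  have key : (τ ^ 3 * r - C₁) * (t + d) ^ 2 ≤ t ^ 3 := by
    rcases le_or_gt (τ ^ 3 * r) C₁ with h | h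
    · have : (τ ^ 3 * r - C₁) * (t + d) ^ 2 ≤ 0 :=
        mul_nonpos_of_nonpos_of_nonneg (by linarith) (sq_nonneg _)
      have ht3 : (0:ℝ) ≤ t ^ 3 := by positivity
      linarith
    · have h1 : t + d ≤ r ^ 3 * (r + c) := by
        have hr3 : 1 ≤ r ^ 3 := one_le_pow₀ hr
        nlinarith
      have h2 : (t + d) ^ 2 ≤ (r ^ 3 * (r + c)) ^ 2 := by
        apply pow_le_pow_left₀ (by linarith) h1
      have h3 : (τ * r ^ 3) ^ 3 ≤ t ^ 3 := by
        apply pow_le_pow_left₀ (by positivity)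
        nlinarith
      have hcore : (τ ^ 3 * r - C₁) * (r ^ 3 * (r + c)) ^ 2 ≤ (τ * r ^ 3) ^ 3 := by
        have hr2 : r ≤ r ^ 2 := by nlinarith
        have hexp : (τ * r ^ 3) ^ 3 - (τ ^ 3 * r - C₁) * (r ^ 3 * (r + c)) ^ 2
            = r ^ 6 * (C₁ * (r + c) ^ 2 - τ ^ 3 * (2 * c * r ^ 2 + c ^ 2 * r)) := by
          ring
        have hc0 : 0 < c := by linarith
        have hfac : τ ^ 3 * (2 * c * r ^ 2 + c ^ 2 * r) ≤ C₁ * (r + c) ^ 2 := by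
          have hrc : r ^ 2 ≤ (r + c) ^ 2 := by nlinarith
          calc τ ^ 3 * (2 * c * r ^ 2 + c ^ 2 * r) ≤ τ ^ 3 * ((2 * c + c ^ 2) * r ^ 2) := by
                apply mul_le_mul_of_nonneg_left _ (by positivity)
                nlinarith
            _ = C₁ * r ^ 2 := by rw [hC₁]; ring
            _ ≤ C₁ * (r + c) ^ 2 := by
                apply mul_le_mul_of_nonneg_left hrc (by positivity)
        have hr6 : (0:ℝ) ≤ r ^ 6 := by positivity
        linarith [mul_nonneg hr6 (sub_nonneg.2 hfac), hexp]
      calc (τ ^ 3 * r - C₁) * (t + d) ^ 2 ≤ (τ ^ 3 * r - C₁) * (r ^ 3 * (r + c)) ^ 2 :=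
            mul_le_mul_of_nonneg_left h2 (by linarith)
        _ ≤ (τ * r ^ 3) ^ 3 := hcore
        _ ≤ t ^ 3 := h3
  calc (τ ^ 3 * ((r ^ 2) ^ 2 * r) - C₁ * (r ^ 2) ^ 2)
        * (t + d) ^ 2
      = (r ^ 2) ^ 2 * ((τ ^ 3 * r - C₁) * (t + d) ^ 2) := by ring
    _ ≤ (r ^ 2) ^ 2 * t ^ 3 := by
        apply mul_le_mul_of_nonneg_left key (by positivity)


set_option maxHeartbeats 2000000 in
/-- The first variance bound from the two-window argument: if `T ≤ diam A ≤ k²` where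
`T = ⌈τ k^{3/2}⌉`, then
`V(A,T) ≥ ((u₁+v₁)(α₁−1)² + (2−u₂−v₂)(α₂−1)²)·τ³·k^{5/2} − O(k²)`. -/
theorem variance_bound_one (τ α₁ α₂ : ℝ) (hτ : 0 < τ) (hα₁ : 0 < α₁) (h₁ : α₁ < 1)
    (h₂ : 1 < α₂) :
    ∃ C : ℝ, 0 ≤ C ∧ ∀ A : Finset ℤ, A.Nonempty →
      let k : ℕ := A.card
      let T : ℤ := ⌈τ * (k : ℝ) ^ ((3 : ℝ) / 2)⌉
      T ≤ diam A → diam A ≤ (k : ℤ) ^ 2 →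
      let u₁ := uCut A T α₁
      let u₂ := uCut A T α₂
      let v₁ := vCut A T α₁
      let v₂ := vCut A T α₂
      (V A T : ℝ) ≥ ((u₁ + v₁) * (α₁ - 1) ^ 2 + (2 - u₂ - v₂) * (α₂ - 1) ^ 2)
          * τ ^ 3 * (k : ℝ) ^ ((5 : ℝ) / 2) - C * (k : ℝ) ^ 2 := by
  set M₀ : ℝ := 2 * (α₁ - 1) ^ 2 + 2 * (α₂ - 1) ^ 2 with hM₀
  set C₁ : ℝ := τ ^ 3 * ((τ + 1) ^ 2 + 2 * (τ + 1)) with hC₁def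
  refine ⟨M₀ * C₁ + 2 * (α₁ - 1) ^ 2, by positivity, ?_⟩
  intro A hA
  intro k T hTd hdk u₁ u₂ v₁ v₂
  have hTdef : T = ⌈τ * (k : ℝ) ^ ((3 : ℝ) / 2)⌉ := rfl
  have hu₁ : u₁ = uCut A T α₁ := rfl
  have hu₂ : u₂ = uCut A T α₂ := rfl
  have hv₁ : v₁ = vCut A T α₁ := rfl
  have hv₂ : v₂ = vCut A T α₂ := rfl
  have hk1 : 0 < k := Finset.card_pos.2 hA
  have hkR : (1:ℝ) ≤ (k:ℝ) := by exact_mod_cast hk1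
  have hkpos : (0:ℝ) < (k:ℝ) := by linarith
  have hx : (0:ℝ) < τ * (k:ℝ) ^ ((3:ℝ)/2) := by positivity
  have hTpos : 0 < T := by rw [hTdef]; exact Int.ceil_pos.2 hx
  set r : ℝ := Real.sqrt (k:ℝ) with hrdef
  have hr2 : r ^ 2 = (k:ℝ) := Real.sq_sqrt hkpos.le
  have hr0 : 0 ≤ r := Real.sqrt_nonneg _
  have hr1 : 1 ≤ r := by nlinarith
  have h32 : (k:ℝ) ^ ((3:ℝ)/2) = (k:ℝ) * r := by
    rw [show ((3:ℝ)/2) = 1 + 1/2 by norm_num, Real.rpow_add hkpos, Real.rpow_one,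
      ← Real.sqrt_eq_rpow]
  have h52 : (k:ℝ) ^ ((5:ℝ)/2) = (k:ℝ) ^ 2 * r := by
    rw [show ((5:ℝ)/2) = 2 + 1/2 by norm_num, Real.rpow_add hkpos, ← Real.sqrt_eq_rpow,
      show ((2:ℝ)) = ((2:ℕ):ℝ) by norm_num, Real.rpow_natCast]
  set t : ℝ := (T:ℝ) with htdef
  set d : ℝ := ((diam A : ℤ) : ℝ) with hddef
  have htlb : τ * ((k:ℝ) * r) ≤ t := by
    rw [htdef, hTdef, ← h32]; exact Int.le_ceil _
  have htub : t ≤ τ * ((k:ℝ) * r) + 1 := by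
    rw [htdef, hTdef, ← h32]; exact le_of_lt (Int.ceil_lt_add_one _)
  have ht1 : (1:ℝ) ≤ t := by
    rw [htdef]; exact_mod_cast hTpos
  have htd : t ≤ d := by rw [htdef, hddef]; exact_mod_cast hTd
  have hd : d ≤ (k:ℝ) ^ 2 := by rw [hddef]; exact_mod_cast hdk
  have htd0 : (0:ℝ) < t + d := by linarith
  set Q : ℝ := ((Abar A T : ℚ) : ℝ) with hQdef
  have hQeq : Q = ((k:ℝ) * t) / (t + d) := by
    rw [hQdef, Abar]
    push_cast
    rfl
  have hQpos : 0 < Q := by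
    rw [hQeq]
    exact div_pos (mul_pos hkpos (by linarith)) htd0
  have hQle : Q ≤ (k:ℝ) := by
    rw [hQeq, div_le_iff₀ htd0]
    nlinarith
  have hQ2le : Q ^ 2 ≤ (k:ℝ) ^ 2 := by nlinarith
  -- key analytic bound
  have hkey := key_ineq τ r t d hτ hr1 ht1 (by rw [hr2]; exact htlb) (by rw [hr2]; exact htub)
    htd (by rw [hr2]; exact hd)
  rw [hr2] at hkey
  have htQ : τ ^ 3 * ((k:ℝ) ^ 2 * r) - C₁ * (k:ℝ) ^ 2 ≤ t * Q ^ 2 := by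
    rw [hQeq]
    calc τ ^ 3 * ((k:ℝ) ^ 2 * r) - C₁ * (k:ℝ) ^ 2 ≤ t * (((k:ℝ) * t) / (t + d)) ^ 2 := hkey
      _ = t * ((k:ℝ) * t / (t + d)) ^ 2 := by ring
  -- variance decomposition bound
  have hVmain := V_ge_main (A := A) (α₁ := α₁) (α₂ := α₂) hTpos hTd hQpos hα₁ h₁ h₂
  set B : ℝ := (u₁ + v₁) * (α₁ - 1) ^ 2 + (2 - u₂ - v₂) * (α₂ - 1) ^ 2 with hBdef
  have hB0 : 0 ≤ B := by
    have h1 := uCut_nonneg (A := A) (α := α₁) hTpos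
    have h2 := vCut_nonneg (A := A) (α := α₁) hTpos
    have h3 := uCut_le_one (A := A) (α := α₂) hTpos
    have h4 := vCut_le_one (A := A) (α := α₂) hTpos
    rw [hBdef, hu₁, hv₁, hu₂, hv₂]
    have := mul_nonneg (show (0:ℝ) ≤ uCut A T α₁ + vCut A T α₁ by linarith)
      (sq_nonneg (α₁ - 1))
    have := mul_nonneg (show (0:ℝ) ≤ 2 - uCut A T α₂ - vCut A T α₂ by linarith)
      (sq_nonneg (α₂ - 1))
    linarith
  have hBM : B ≤ M₀ := by
    have h1 := uCut_le_one (A := A) (α := α₁) hTpos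
    have h2 := vCut_le_one (A := A) (α := α₁) hTpos
    have h3 := uCut_nonneg (A := A) (α := α₂) hTpos
    have h4 := vCut_nonneg (A := A) (α := α₂) hTpos
    rw [hBdef, hM₀, hu₁, hv₁, hu₂, hv₂]
    have := mul_le_mul_of_nonneg_right
      (show uCut A T α₁ + vCut A T α₁ ≤ 2 by linarith) (sq_nonneg (α₁ - 1))
    have := mul_le_mul_of_nonneg_right
      (show 2 - uCut A T α₂ - vCut A T α₂ ≤ 2 by linarith) (sq_nonneg (α₂ - 1))
    linarith
  have hV' : (V A T : ℝ) ≥ B * (t * Q ^ 2) - 2 * (α₁ - 1) ^ 2 * Q ^ 2 := by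
    rw [hBdef, hu₁, hv₁, hu₂, hv₂]
    calc (V A T : ℝ) ≥
        (uCut A T α₁ * T - 1) * ((1 - α₁) * Q) ^ 2
        + (vCut A T α₁ * T - 1) * ((1 - α₁) * Q) ^ 2
        + (1 - uCut A T α₂) * T * ((α₂ - 1) * Q) ^ 2
        + (1 - vCut A T α₂) * T * ((α₂ - 1) * Q) ^ 2 := hVmain
      _ = ((uCut A T α₁ + vCut A T α₁) * (α₁ - 1) ^ 2
          + (2 - uCut A T α₂ - vCut A T α₂) * (α₂ - 1) ^ 2) * (t * Q ^ 2)
          - 2 * (α₁ - 1) ^ 2 * Q ^ 2 := by rw [htdef]; ring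
  have hC₁0 : (0:ℝ) ≤ C₁ := by rw [hC₁def]; positivity
  have goal2 : (V A T : ℝ) ≥ B * τ ^ 3 * (k:ℝ) ^ ((5:ℝ)/2)
      - (M₀ * C₁ + 2 * (α₁ - 1) ^ 2) * (k:ℝ) ^ 2 := by
    calc (V A T : ℝ) ≥ B * (t * Q ^ 2) - 2 * (α₁ - 1) ^ 2 * Q ^ 2 := hV'
      _ ≥ B * (τ ^ 3 * ((k:ℝ) ^ 2 * r) - C₁ * (k:ℝ) ^ 2) - 2 * (α₁ - 1) ^ 2 * (k:ℝ) ^ 2 := by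
          have e1 := mul_le_mul_of_nonneg_left htQ hB0
          have e2 := mul_le_mul_of_nonneg_left hQ2le
            (show (0:ℝ) ≤ 2 * (α₁ - 1) ^ 2 by positivity)
          linarith
      _ = B * τ ^ 3 * ((k:ℝ) ^ 2 * r) - (B * C₁ * (k:ℝ) ^ 2 + 2 * (α₁ - 1) ^ 2 * (k:ℝ) ^ 2) := by
          ring
      _ ≥ B * τ ^ 3 * ((k:ℝ) ^ 2 * r)
          - (M₀ * C₁ * (k:ℝ) ^ 2 + 2 * (α₁ - 1) ^ 2 * (k:ℝ) ^ 2) := by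
          have := mul_le_mul_of_nonneg_right
            (mul_le_mul_of_nonneg_right hBM hC₁0) (sq_nonneg (k:ℝ))
          linarith
      _ = B * τ ^ 3 * (k:ℝ) ^ ((5:ℝ)/2) - (M₀ * C₁ + 2 * (α₁ - 1) ^ 2) * (k:ℝ) ^ 2 := by
          rw [h52]; ring
  exact goal2
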